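/- Let V : ℝ^N × ℝ^N → ℝ be continuous and let φ ∈ L^∞(Ω). If χ_{A_n} ⇀ X weakly-* in L^∞(Ω), then sup_{y ∈ Ω̄} | ∫_Ω V(x,y) (χ_{A_n}(x) − X(x)) φ(x) dx | → 0 as n → ∞; that is, the functions h_n(y) = ∫_Ω V(x,y) χ_{A_n}(x) φ(x) dx converge uniformly on Ω̄ to h(y) = ∫_Ω V(x,y) X(x) φ(x) dx. -/

import Mathlib

/-!
On the compact set `Ω̄` the kernel `V` is uniformly continuous, so
`|h_n(y) - h_n(y')| ≤ M |Ω| sup_{x ∈ Ω̄} |V(x,y) - V(x,y')|` makes the family `(h_n)` uniformly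
equicontinuous on `Ω̄`, since `|χ_{A_n}| ≤ 1`. Testing the weak-* convergence against
`ψ = V(·,y) φ ∈ L¹(Ω)` gives `h_n(y) → h(y)` for each `y`, and on a compact set pointwise
convergence of an equicontinuous family is uniform (Arzelà–Ascoli).
-/

open MeasureTheory Set Filter Topology Bornology

/-- Characteristic function of a set, real-valued. -/
noncomputable def chi {α : Type*} (A : Set α) (x : α) : ℝ :=
  @ite _ (x ∈ A) (Classical.propDecidable _) 1 0

/-- The nonlocal operator `L_n` associated with the partition `(A, B)` of `Ω̄`
and the kernels `J, G, R`. -/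
noncomputable def Lop {N : ℕ} (Ω A B : Set (Fin N → ℝ))
    (J G R : (Fin N → ℝ) → (Fin N → ℝ) → ℝ) (f : (Fin N → ℝ) → ℝ) (x : Fin N → ℝ) : ℝ :=
  chi A x * (∫ y in Ω, chi A y * J x y * (f y - f x))
    + chi B x * (∫ y in Ω, chi B y * G x y * (f y - f x))
    + chi A x * (∫ y in Ω, chi B y * R x y * (f y - f x))
    + chi B x * (∫ y in Ω, chi A y * R x y * (f y - f x))

/-- Hypothesis (H) on a kernel: continuity, nonnegativity, positivity on the diagonal,
symmetry, and unit total mass. -/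
def KernelH {N : ℕ} (V : (Fin N → ℝ) → (Fin N → ℝ) → ℝ) : Prop :=
  Continuous (fun p : (Fin N → ℝ) × (Fin N → ℝ) => V p.1 p.2) ∧
    (∀ x y, 0 ≤ V x y) ∧ (∀ x, 0 < V x x) ∧ (∀ x y, V x y = V y x) ∧
    (∀ x, (∫ y, V x y) = 1)

lemma abs_chi_le_one {α : Type*} (A : Set α) (x : α) : |chi A x| ≤ 1 := by
  unfold chi; split <;> norm_num

lemma measurable_chi {α : Type*} [MeasurableSpace α] {A : Set α} (hA : MeasurableSet A) :
    Measurable (chi A) := by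
  have : chi A = A.indicator 1 := by
    funext x
    by_cases hx : x ∈ A <;> simp [chi, hx]
  exact this ▸ measurable_one.indicator hA

theorem Metric.uniformEquicontinuousOn_iff {ι α β : Type*} [PseudoMetricSpace α]
    [PseudoMetricSpace β] {F : ι → β → α} {S : Set β} :
    UniformEquicontinuousOn F S ↔ ∀ ε > 0, ∃ δ > 0, ∀ x ∈ S, ∀ y ∈ S, dist x y < δ →
      ∀ i, dist (F i x) (F i y) < ε := by
  rw [(Metric.uniformity_basis_dist.inf_principal (S ×ˢ S)).uniformEquicontinuousOn_iff
    Metric.uniformity_basis_dist]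
  simp only [mem_inter_iff, mem_ofPred_eq, mem_prod]
  exact forall₂_congr fun ε _ => exists_congr fun δ => and_congr_right fun _ =>
    ⟨fun h x hx y hy hxy => h x y ⟨hxy, hx, hy⟩, fun h x y ⟨hxy, hx, hy⟩ => h x hx y hy hxy⟩

theorem IsCompact.uniformEquicontinuousOn_of_continuousOn {α β γ : Type*}
    [PseudoMetricSpace α] [PseudoMetricSpace β] [PseudoMetricSpace γ] {s : Set α} {t : Set β}
    (hs : IsCompact s) (ht : IsCompact t) {V : α → β → γ}
    (hV : ContinuousOn (Function.uncurry V) (s ×ˢ t)) :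
    UniformEquicontinuousOn (fun x : s => V x) t := by
  rw [Metric.uniformEquicontinuousOn_iff]
  intro ε hε
  obtain ⟨δ, hδ, hVδ⟩ :=
    Metric.uniformContinuousOn_iff.1 ((hs.prod ht).uniformContinuousOn_of_continuous hV) ε hε
  refine ⟨δ, hδ, fun y hy y' hy' hyy' x => hVδ (x, y) ⟨x.2, hy⟩ (x, y') ⟨x.2, hy'⟩ ?_⟩
  simpa [Prod.dist_eq] using hyy'

theorem EquicontinuousOn.tendstoUniformlyOn_of_tendsto {ι X α : Type*} [TopologicalSpace X]
    [UniformSpace α] {F : ι → X → α} {f : X → α} {K : Set X} {p : Filter ι}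
    (hK : IsCompact K) (hF : EquicontinuousOn F K)
    (h : ∀ x ∈ K, Tendsto (F · x) p (𝓝 (f x))) : TendstoUniformlyOn F f p K := by
  have hpi : Tendsto ((⋃₀ {K}).domRestrict ∘ F) p (𝓝 ((⋃₀ {K}).domRestrict f)) := by
    rw [sUnion_singleton]
    exact tendsto_pi_nhds.2 fun x => h x x.2
  have := (EquicontinuousOn.tendsto_uniformOnFun_iff_pi' (by simpa) (by simpa) p f).2 hpi
  exact UniformOnFun.tendsto_iff_tendstoUniformlyOn.1 this K rfl

section IntegralAgainstBoundedWeights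

variable {α : Type*} [MeasurableSpace α] {μ : Measure α} [IsFiniteMeasure μ]

theorem dist_integral_mul_integral_mul_le {g ψ ψ' : α → ℝ} {C ε : ℝ}
    (hψ : Integrable ψ μ) (hψ' : Integrable ψ' μ) (hg : AEStronglyMeasurable g μ)
    (hgC : ∀ᵐ x ∂μ, ‖g x‖ ≤ C) (hψψ' : ∀ᵐ x ∂μ, dist (ψ x) (ψ' x) ≤ ε) :
    dist (∫ x, ψ x * g x ∂μ) (∫ x, ψ' x * g x ∂μ) ≤ ε * C * μ.real univ := by
  rw [dist_eq_norm, ← integral_sub (hψ.mul_bdd hg hgC) (hψ'.mul_bdd hg hgC)]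
  refine norm_integral_le_of_norm_le_const ?_
  filter_upwards [hgC, hψψ'] with x hgx hψx
  rw [← sub_mul, norm_mul, ← dist_eq_norm]
  exact mul_le_mul hψx hgx (norm_nonneg _) (dist_nonneg.trans hψx)

theorem uniformEquicontinuousOn_integral_mul {ι β : Type*} [PseudoMetricSpace β]
    {g : ι → α → ℝ} {C : ℝ} (hg : ∀ i, AEStronglyMeasurable (g i) μ)
    (hgC : ∀ i, ∀ᵐ x ∂μ, ‖g i x‖ ≤ C) {Ψ : α → β → ℝ} {s : Set α} {K : Set β}
    (hs : ∀ᵐ x ∂μ, x ∈ s) (hΨint : ∀ y ∈ K, Integrable (Ψ · y) μ)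
    (hΨ : UniformEquicontinuousOn (fun x : s => Ψ x) K) :
    UniformEquicontinuousOn (fun i y => ∫ x, Ψ x y * g i x ∂μ) K := by
  rw [Metric.uniformEquicontinuousOn_iff] at hΨ ⊢
  intro ε hε
  have hsmall : Tendsto (fun η : ℝ => η * C * μ.real univ) (𝓝[>] 0) (𝓝 0) := by
    have : Continuous fun η : ℝ => η * C * μ.real univ := by fun_prop
    exact (this.tendsto' 0 0 (by simp)).mono_left nhdsWithin_le_nhds
  obtain ⟨η, hηε, hη⟩ := ((hsmall.eventually (gt_mem_nhds hε)).and self_mem_nhdsWithin).exists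
  obtain ⟨δ, hδ, hΨδ⟩ := hΨ η hη
  refine ⟨δ, hδ, fun y hy y' hy' hyy' i => ?_⟩
  refine (dist_integral_mul_integral_mul_le (hΨint y hy) (hΨint y' hy') (hg i) (hgC i) ?_).trans_lt
    hηε
  filter_upwards [hs] with x hx
  exact (hΨδ y hy y' hy' hyy' ⟨x, hx⟩).le

end IntegralAgainstBoundedWeights

theorem stmt5_general {N : ℕ} (Ω : Set (Fin N → ℝ))
    (hΩb : IsBounded Ω)
    (V : (Fin N → ℝ) → (Fin N → ℝ) → ℝ)
    (hV : Continuous (fun p : (Fin N → ℝ) × (Fin N → ℝ) => V p.1 p.2))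
    (φ : (Fin N → ℝ) → ℝ) (hφmeas : Measurable φ) (M : ℝ) (hφ : ∀ x, |φ x| ≤ M)
    (A : ℕ → Set (Fin N → ℝ)) (hAmeas : ∀ n, MeasurableSet (A n))
    (X : (Fin N → ℝ) → ℝ)
    (hXA : ∀ ψ : (Fin N → ℝ) → ℝ, Integrable ψ (volume.restrict Ω) →
      Tendsto (fun n => ∫ x in Ω, chi (A n) x * ψ x) atTop (𝓝 (∫ x in Ω, X x * ψ x))) :
    TendstoUniformlyOn (fun n y => ∫ x in Ω, V x y * chi (A n) x * φ x)
      (fun y => ∫ x in Ω, V x y * X x * φ x) atTop (closure Ω) := by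
  have hK : IsCompact (closure Ω) := hΩb.isCompact_closure
  have : IsFiniteMeasure (volume.restrict Ω) := isFiniteMeasure_restrict.2 hΩb.measure_lt_top.ne
  have hΩK : ∀ᵐ x ∂volume.restrict Ω, x ∈ closure Ω :=
    ae_mono (Measure.restrict_mono subset_closure le_rfl)
      (ae_restrict_mem isClosed_closure.measurableSet)
  have hVint : ∀ y ∈ closure Ω, Integrable (V · y) (volume.restrict Ω) := fun _ _ =>
    ((hV.comp (continuous_id.prodMk continuous_const)).continuousOn.integrableOn_compact hK).mono_set
      subset_closure
  simp only [mul_assoc]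
  refine EquicontinuousOn.tendstoUniformlyOn_of_tendsto hK ?_ fun y hy => ?_
  · refine (uniformEquicontinuousOn_integral_mul (C := M) (fun n => ?_) (fun n => ?_) hΩK hVint
      (hK.uniformEquicontinuousOn_of_continuousOn hK hV.continuousOn)).equicontinuousOn
    · exact ((measurable_chi (hAmeas n)).mul hφmeas).aestronglyMeasurable
    · refine Eventually.of_forall fun x => ?_
      simpa [abs_mul] using mul_le_mul (abs_chi_le_one (A n) x) (hφ x) (abs_nonneg _) zero_le_one
  · have := hXA _ ((hVint y hy).mul_bdd hφmeas.aestronglyMeasurable (Eventually.of_forall hφ))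
    simpa only [mul_left_comm (chi _ _), mul_left_comm (X _)] using this

theorem stmt5 {N : ℕ} (Ω : Set (Fin N → ℝ))
    (hΩo : IsOpen Ω) (hΩb : IsBounded Ω) (hΩc : IsConnected Ω)
    (V : (Fin N → ℝ) → (Fin N → ℝ) → ℝ)
    (hV : Continuous (fun p : (Fin N → ℝ) × (Fin N → ℝ) => V p.1 p.2))
    (φ : (Fin N → ℝ) → ℝ) (hφmeas : Measurable φ) (M : ℝ) (hφ : ∀ x, |φ x| ≤ M)
    (A : ℕ → Set (Fin N → ℝ)) (hAmeas : ∀ n, MeasurableSet (A n))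
    (hAsub : ∀ n, A n ⊆ closure Ω)
    (X : (Fin N → ℝ) → ℝ)
    (hXA : ∀ ψ : (Fin N → ℝ) → ℝ, Integrable ψ (volume.restrict Ω) →
      Tendsto (fun n => ∫ x in Ω, chi (A n) x * ψ x) atTop (𝓝 (∫ x in Ω, X x * ψ x))) :
    TendstoUniformlyOn (fun n y => ∫ x in Ω, V x y * chi (A n) x * φ x)
      (fun y => ∫ x in Ω, V x y * X x * φ x) atTop (closure Ω) :=
  stmt5_general Ω hΩb V hV φ hφmeas M hφ A hAmeas X hXA
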